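/- Let λ : ℕ → (0,∞) satisfy λ(n) = o(n) and lim_{n→∞} λ(n) = ∞, fix an arbitrarily small ε > 0, and let v : ℕ → ℕ. For each n, let C_n be a Bernoulli(p(n)) random m(n)×n test matrix with p(n) = 1/⌈λ(n)^{1+ε}⌉ and m(n) = ⌈2e·(⌈λ(n)^{1+ε}⌉)²·log n + 4e·v(n)·⌈λ(n)^{1+ε}⌉⌉ = (2e·λ(n)^{2(1+ε)}·log n + 4e·v(n)·λ(n)^{1+ε})·(1+o(1)), drawn independently of the defective set 𝒟_n of the Poisson PGT model on n subjects with parameter λ(n), and let y_n be the true outcome vector. Then the probability that there exists a corrupted outcome vector z ∈ {0,1}^{m(n)} at Hamming distance at most v(n) from y_n for which the v(n)-tolerant decoder applied to C_n and z outputs a set different from 𝒟_n tends to 0 as n → ∞. -/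

import Mathlib

open Filter Finset

/-- `P(𝒟 = S)` in the Poisson PGT model on `n` subjects with parameter `lam`. -/
noncomputable def pgtWeight (n : ℕ) (lam : ℝ) (S : Finset (Fin n)) : ℝ :=
  (Real.exp lam / ∑ d ∈ Finset.range (n + 1), lam ^ d / d.factorial) *
    lam ^ S.card * Real.exp (-lam) * (n - S.card).factorial / n.factorial

/-- Probability of a realization `C` of an i.i.d. Bernoulli(p) random test matrix. -/
noncomputable def bernWeight {m n : ℕ} (p : ℝ) (C : Fin m → Fin n → Bool) : ℝ :=
  ∏ j : Fin m, ∏ i : Fin n, if C j i then p else 1 - p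

/-- Outcome vector: test `j` is positive iff some defective participates in it. -/
def outcome {m n : ℕ} (C : Fin m → Fin n → Bool) (S : Finset (Fin n)) : Fin m → Bool :=
  fun j => decide (∃ i ∈ S, C j i = true)

/-- The `v`-tolerant decoder: `D̂ = {i : N_i ≤ v}` where
`N_i = |{j : x_i(j) = 1 and z(j) = 0}|`. -/
def tolDecoder {m n : ℕ} (C : Fin m → Fin n → Bool) (z : Fin m → Bool) (v : ℕ) :
    Finset (Fin n) :=
  Finset.univ.filter (fun i =>
    (Finset.univ.filter (fun j => C j i = true ∧ z j = false)).card ≤ v)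

/-- Probability that some corruption of the outcome vector by at most `v` errors makes the
`v`-tolerant decoder fail, for an i.i.d. Bernoulli(p) test matrix with `mn` tests drawn
independently of the Poisson PGT defective set. -/
noncomputable def errProbTol (n mn v : ℕ) (lam p : ℝ) : ℝ :=
  ∑ C : Fin mn → Fin n → Bool, ∑ S : Finset (Fin n),
    bernWeight p C * pgtWeight n lam S *
      (if ∃ z : Fin mn → Bool,
          hammingDist z (outcome C S) ≤ v ∧ tolDecoder C z v ≠ S then 1 else 0)


/-!
Condition on the defective set `S`. When at most `v` outcomes are corrupted the tolerant decoder
never rejects a defective, so it fails only if some non-defective `i` lies in at most `2v` tests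
that are negative in the true outcome. In a Bernoulli(p) design each row is such a test for `i`
independently with probability `q = p (1 - p)^|S|`, so Markov's inequality for `e^{-N_i}` bounds
the failure probability by `n e^{2v} (1 - (1 - e⁻¹) q)^m`, which is at most `n⁻²` when
`|S| ≤ T := ⌈λ^{1+ε/2}⌉`. The truncated Poisson weights decay geometrically beyond `T`, so
`|S| > T` has probability at most `2λ/(T+1) ≤ 2λ^{-ε/2}`.
-/

def negTests {m n : ℕ} (C : Fin m → Fin n → Bool) (z : Fin m → Bool) (i : Fin n) :
    Finset (Fin m) :=
  univ.filter (fun j => C j i = true ∧ z j = false)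

lemma mem_tolDecoder {m n v : ℕ} {C : Fin m → Fin n → Bool} {z : Fin m → Bool} {i : Fin n} :
    i ∈ tolDecoder C z v ↔ #(negTests C z i) ≤ v := by
  simp [tolDecoder, negTests]

lemma card_negTests_le_add_hammingDist {m n : ℕ} (C : Fin m → Fin n → Bool)
    (y z : Fin m → Bool) (i : Fin n) :
    #(negTests C y i) ≤ #(negTests C z i) + hammingDist z y := by
  refine (card_le_card fun j hj => ?_).trans (card_union_le _ _)
  simp only [negTests, mem_union, mem_filter, mem_univ, true_and] at hj ⊢
  cases hz : z j
  · exact Or.inl ⟨hj.1, rfl⟩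
  · exact Or.inr (by simp [hj.2])

lemma negTests_outcome_eq_empty {m n : ℕ} (C : Fin m → Fin n → Bool) {S : Finset (Fin n)}
    {i : Fin n} (hi : i ∈ S) : negTests C (outcome C S) i = ∅ := by
  ext j
  simp only [negTests, outcome, mem_filter, mem_univ, true_and, decide_eq_false_iff_not,
    not_exists, not_and, notMem_empty, iff_false]
  exact fun hj h => h i hi hj

lemma subset_tolDecoder {m n v : ℕ} {C : Fin m → Fin n → Bool} {S : Finset (Fin n)}
    {z : Fin m → Bool} (hz : hammingDist z (outcome C S) ≤ v) : S ⊆ tolDecoder C z v := by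
  intro i hi
  have := card_negTests_le_add_hammingDist C z (outcome C S) i
  rw [negTests_outcome_eq_empty C hi, card_empty, zero_add, hammingDist_comm] at this
  exact mem_tolDecoder.2 (this.trans hz)

lemma exists_card_negTests_le_of_tolDecoder_ne {m n v : ℕ} {C : Fin m → Fin n → Bool}
    {S : Finset (Fin n)} {z : Fin m → Bool} (hz : hammingDist z (outcome C S) ≤ v)
    (hne : tolDecoder C z v ≠ S) : ∃ i ∉ S, #(negTests C (outcome C S) i) ≤ 2 * v := by
  obtain ⟨i, hiD, hiS⟩ := not_subset.1 fun h => hne (h.antisymm (subset_tolDecoder hz))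
  refine ⟨i, hiS, ?_⟩
  have := card_negTests_le_add_hammingDist C (outcome C S) z i
  have := mem_tolDecoder.1 hiD
  omega

noncomputable def bernProd {ι : Type*} [Fintype ι] (p : ℝ) (r : ι → Bool) : ℝ :=
  ∏ i, if r i then p else 1 - p

lemma bernWeight_eq_prod_bernProd {m n : ℕ} (p : ℝ) (C : Fin m → Fin n → Bool) :
    bernWeight p C = ∏ j, bernProd p (C j) := rfl

lemma bernProd_nonneg {ι : Type*} [Fintype ι] {p : ℝ} (hp0 : 0 ≤ p) (hp1 : p ≤ 1)
    (r : ι → Bool) : 0 ≤ bernProd p r :=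
  prod_nonneg fun i _ => by split <;> linarith

lemma sum_bernProd_mul_prod {ι : Type*} [Fintype ι] [DecidableEq ι] (p : ℝ)
    (g : ι → Bool → ℝ) :
    ∑ r : ι → Bool, bernProd p r * ∏ i, g i (r i)
      = ∏ i, (p * g i true + (1 - p) * g i false) := by
  simp only [bernProd, ← prod_mul_distrib]
  rw [← Fintype.prod_sum (fun i (b : Bool) => (if b then p else 1 - p) * g i b)]
  simp

lemma sum_bernProd {ι : Type*} [Fintype ι] [DecidableEq ι] (p : ℝ) :
    ∑ r : ι → Bool, bernProd p r = 1 := by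
  simpa using sum_bernProd_mul_prod p (fun _ _ => 1)

lemma sum_bernProd_mul_ite_forall_mem_eq {ι : Type*} [Fintype ι] [DecidableEq ι] (p : ℝ)
    (U : Finset ι) (e : ι → Bool) :
    ∑ r : ι → Bool, bernProd p r * (if ∀ k ∈ U, r k = e k then 1 else 0)
      = ∏ k ∈ U, if e k then p else 1 - p := by
  set g : ι → Bool → ℝ := fun k b => if k ∈ U then (if b = e k then 1 else 0) else 1
  have hind (r : ι → Bool) :
      (if ∀ k ∈ U, r k = e k then (1 : ℝ) else 0) = ∏ k, g k (r k) := by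
    simp [g, prod_boole]
  simp only [hind, sum_bernProd_mul_prod]
  rw [← Fintype.prod_ite_mem U]
  refine prod_congr rfl fun k _ => ?_
  by_cases hk : k ∈ U <;> cases hek : e k <;> simp [g, hk, hek]

lemma sum_bernProd_mul_ite_eq {ι : Type*} [Fintype ι] [DecidableEq ι] (p t : ℝ)
    {S : Finset ι} {i : ι} (hi : i ∉ S) :
    ∑ r : ι → Bool, bernProd p r * (if r i = true ∧ ∀ k ∈ S, r k = false then t else 1)
      = 1 - (1 - t) * (p * (1 - p) ^ #S) := by
  have hevent (r : ι → Bool) : (r i = true ∧ ∀ k ∈ S, r k = false)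
      ↔ ∀ k ∈ insert i S, r k = decide (k = i) := by
    simp only [mem_insert, forall_eq_or_imp, decide_true]
    exact and_congr_right' (forall₂_congr fun k hk => by simp [ne_of_mem_of_not_mem hk hi])
  have hsplit (r : ι → Bool) : (if r i = true ∧ ∀ k ∈ S, r k = false then t else 1)
      = 1 - (1 - t) * (if ∀ k ∈ insert i S, r k = decide (k = i) then 1 else 0) := by
    rw [← if_congr (hevent r) rfl rfl]
    split <;> ring
  simp only [hsplit, mul_sub, mul_one, sum_sub_distrib, sum_bernProd, mul_left_comm _ (1 - t),
    ← mul_sum, sum_bernProd_mul_ite_forall_mem_eq, prod_insert hi, decide_true, if_true]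
  rw [prod_congr rfl fun k hk => by rw [if_neg (by simpa using ne_of_mem_of_not_mem hk hi)],
    prod_const]

lemma sum_bernWeight (m n : ℕ) (p : ℝ) :
    ∑ C : Fin m → Fin n → Bool, bernWeight p C = 1 := by
  simp only [bernWeight_eq_prod_bernProd]
  rw [← Fintype.prod_sum (fun (_ : Fin m) r => bernProd p r)]
  simp [sum_bernProd]

lemma bernWeight_nonneg {m n : ℕ} {p : ℝ} (hp0 : 0 ≤ p) (hp1 : p ≤ 1)
    (C : Fin m → Fin n → Bool) : 0 ≤ bernWeight p C :=
  prod_nonneg fun j _ => bernProd_nonneg hp0 hp1 (C j)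

lemma sum_bernWeight_mul_pow_card_negTests {m n : ℕ} (p t : ℝ) {S : Finset (Fin n)}
    {i : Fin n} (hi : i ∉ S) :
    ∑ C : Fin m → Fin n → Bool, bernWeight p C * t ^ #(negTests C (outcome C S) i)
      = (1 - (1 - t) * (p * (1 - p) ^ #S)) ^ m := by
  have hpow (C : Fin m → Fin n → Bool) : t ^ #(negTests C (outcome C S) i)
      = ∏ j, if C j i = true ∧ ∀ k ∈ S, C j k = false then t else 1 := by
    rw [← prod_const, negTests, prod_filter]
    simp [outcome]
  simp only [hpow, bernWeight_eq_prod_bernProd, ← prod_mul_distrib]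
  rw [← Fintype.prod_sum (fun (_ : Fin m) r =>
    bernProd p r * if r i = true ∧ ∀ k ∈ S, r k = false then t else 1)]
  simp only [prod_const, card_univ, Fintype.card_fin]
  convert congrArg (· ^ m) (sum_bernProd_mul_ite_eq p t hi)

lemma one_sub_mul_mul_one_sub_pow_nonneg {p t : ℝ} (hp0 : 0 ≤ p) (hp1 : p ≤ 1) (ht0 : 0 ≤ t)
    (d : ℕ) : 0 ≤ 1 - (1 - t) * (p * (1 - p) ^ d) := by
  have hq : p * (1 - p) ^ d ≤ 1 :=
    mul_le_one₀ hp1 (by positivity) (pow_le_one₀ (by linarith) (by linarith))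
  nlinarith [mul_nonneg hp0 (pow_nonneg (sub_nonneg.2 hp1) d)]

noncomputable def failProb (m v : ℕ) {n : ℕ} (p : ℝ) (S : Finset (Fin n)) : ℝ :=
  ∑ C : Fin m → Fin n → Bool, bernWeight p C *
    (if ∃ z : Fin m → Bool, hammingDist z (outcome C S) ≤ v ∧ tolDecoder C z v ≠ S
      then 1 else 0)

lemma errProbTol_eq_sum_pgtWeight_mul_failProb (n m v : ℕ) (lam p : ℝ) :
    errProbTol n m v lam p = ∑ S : Finset (Fin n), pgtWeight n lam S * failProb m v p S := by
  rw [errProbTol, sum_comm]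
  simp only [failProb, mul_sum]
  exact sum_congr rfl fun S _ => sum_congr rfl fun C _ => by ring

lemma failProb_le_one {m v n : ℕ} {p : ℝ} (hp0 : 0 ≤ p) (hp1 : p ≤ 1) (S : Finset (Fin n)) :
    failProb m v p S ≤ 1 :=
  (sum_le_sum fun C _ => mul_le_of_le_one_right (bernWeight_nonneg hp0 hp1 C)
    (by split <;> norm_num)).trans_eq (sum_bernWeight m n p)

lemma failProb_le {m v n : ℕ} {p t : ℝ} (hp0 : 0 ≤ p) (hp1 : p ≤ 1) (ht0 : 0 < t)
    (ht1 : t ≤ 1) (S : Finset (Fin n)) :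
    failProb m v p S ≤ n * (1 - (1 - t) * (p * (1 - p) ^ #S)) ^ m / t ^ (2 * v) := by
  have hind (C : Fin m → Fin n → Bool) :
      (if ∃ z : Fin m → Bool, hammingDist z (outcome C S) ≤ v ∧ tolDecoder C z v ≠ S
        then (1 : ℝ) else 0)
        ≤ ∑ i ∈ Sᶜ, t ^ #(negTests C (outcome C S) i) / t ^ (2 * v) := by
    split_ifs with h
    · obtain ⟨z, hz, hne⟩ := h
      obtain ⟨i, hiS, hi⟩ := exists_card_negTests_le_of_tolDecoder_ne hz hne
      refine le_trans ?_ (single_le_sum (fun _ _ => by positivity) (mem_compl.2 hiS))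
      rw [one_le_div (by positivity)]
      exact pow_le_pow_of_le_one ht0.le ht1 hi
    · positivity
  calc failProb m v p S
      ≤ ∑ C : Fin m → Fin n → Bool, bernWeight p C *
          ∑ i ∈ Sᶜ, t ^ #(negTests C (outcome C S) i) / t ^ (2 * v) :=
        sum_le_sum fun C _ => mul_le_mul_of_nonneg_left (hind C) (bernWeight_nonneg hp0 hp1 C)
    _ = ∑ i ∈ Sᶜ, (1 - (1 - t) * (p * (1 - p) ^ #S)) ^ m / t ^ (2 * v) := by
        simp only [mul_sum, sum_comm (s := univ), mul_div_assoc']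
        refine sum_congr rfl fun i hi => ?_
        rw [← sum_div, sum_bernWeight_mul_pow_card_negTests p t (mem_compl.1 hi)]
    _ ≤ n * (1 - (1 - t) * (p * (1 - p) ^ #S)) ^ m / t ^ (2 * v) := by
        rw [sum_const, nsmul_eq_mul, mul_div_assoc]
        refine mul_le_mul_of_nonneg_right ?_ (div_nonneg (pow_nonneg ?_ m) (by positivity))
        · exact_mod_cast (card_le_univ Sᶜ).trans_eq (Fintype.card_fin n)
        · exact one_sub_mul_mul_one_sub_pow_nonneg hp0 hp1 ht0.le _

noncomputable def truncPoisson (n : ℕ) (lam : ℝ) (d : ℕ) : ℝ :=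
  lam ^ d / d.factorial / ∑ e ∈ range (n + 1), lam ^ e / e.factorial

lemma sum_pgtWeight_mul_comp_card (n : ℕ) (lam : ℝ) (g : ℕ → ℝ) :
    ∑ S : Finset (Fin n), pgtWeight n lam S * g #S
      = ∑ d ∈ range (n + 1), truncPoisson n lam d * g d := by
  simp only [pgtWeight]
  rw [← powerset_univ, sum_powerset_apply_card
    (fun d => (Real.exp lam / ∑ e ∈ range (n + 1), lam ^ e / e.factorial) *
      lam ^ d * Real.exp (-lam) * (n - d).factorial / n.factorial * g d)]
  simp only [card_univ, Fintype.card_fin, nsmul_eq_mul]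
  refine sum_congr rfl fun d hd => ?_
  rw [Nat.cast_choose ℝ (Nat.lt_succ_iff.1 (mem_range.1 hd)), truncPoisson, Real.exp_neg]
  field_simp

lemma sum_pgtWeight {n : ℕ} {lam : ℝ} (hlam : 0 ≤ lam) :
    ∑ S : Finset (Fin n), pgtWeight n lam S = 1 := by
  have hZ : 0 < ∑ e ∈ range (n + 1), lam ^ e / e.factorial :=
    sum_pos' (fun e _ => by positivity) ⟨0, by simp⟩
  simpa [truncPoisson, ← sum_div, hZ.ne'] using sum_pgtWeight_mul_comp_card n lam (fun _ => 1)

lemma pgtWeight_nonneg {n : ℕ} {lam : ℝ} (hlam : 0 ≤ lam) (S : Finset (Fin n)) :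
    0 ≤ pgtWeight n lam S := by
  unfold pgtWeight
  have : 0 ≤ ∑ e ∈ range (n + 1), lam ^ e / e.factorial := sum_nonneg fun e _ => by positivity
  positivity

lemma pow_add_div_factorial_le {lam : ℝ} (hlam : 0 ≤ lam) (T j : ℕ) :
    lam ^ (T + j) / (T + j).factorial ≤ lam ^ T / T.factorial * (lam / (T + 1)) ^ j := by
  have hfac : (T.factorial : ℝ) * (T + 1) ^ j ≤ (T + j).factorial := by
    exact_mod_cast Nat.factorial_mul_pow_le_factorial
  rw [div_pow, div_mul_div_comm, ← pow_add]
  exact div_le_div_of_nonneg_left (by positivity) (by positivity) hfac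

lemma sum_truncPoisson_gt_le {n T : ℕ} {lam : ℝ} (hlam : 0 ≤ lam)
    (hρ : lam / (T + 1) ≤ 1 / 2) :
    ∑ d ∈ range (n + 1) with T < d, truncPoisson n lam d ≤ 2 * (lam / (T + 1)) := by
  set ρ := lam / (T + 1)
  have hρ0 : 0 ≤ ρ := by positivity
  rcases lt_or_ge n T with hnT | hTn
  · rw [filter_false_of_mem fun d hd => by simp at hd; omega, sum_empty]
    positivity
  set Z := ∑ e ∈ range (n + 1), lam ^ e / e.factorial
  have hTZ : lam ^ T / T.factorial / Z ≤ 1 :=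
    div_le_one_of_le₀ (single_le_sum (f := fun e => lam ^ e / (e.factorial : ℝ))
      (fun e _ => by positivity) (mem_range.2 (Nat.lt_succ_of_le hTn))) (by positivity)
  have hIco : (range (n + 1)).filter (T < ·) = Ico (T + 1) (n + 1) := by
    ext d; simp; omega
  calc ∑ d ∈ range (n + 1) with T < d, truncPoisson n lam d
      = ∑ j ∈ range (n - T), truncPoisson n lam (T + (j + 1)) := by
        rw [hIco, sum_Ico_eq_sum_range]
        exact sum_congr (by congr 1; omega) fun j _ => by ring_nf
    _ ≤ ∑ j ∈ range (n - T), lam ^ T / T.factorial / Z * ρ ^ (j + 1) :=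
        sum_le_sum fun j _ => by
          rw [truncPoisson, div_mul_eq_mul_div₀]
          exact div_le_div_of_nonneg_right (pow_add_div_factorial_le hlam T (j + 1)) (by positivity)
    _ ≤ ∑ j ∈ range (n - T), ρ * ρ ^ j :=
        sum_le_sum fun j _ => by
          rw [← pow_succ']
          exact mul_le_of_le_one_left (by positivity) hTZ
    _ ≤ ρ * (1 / (1 - ρ)) := by
        rw [← mul_sum]
        refine mul_le_mul_of_nonneg_left ?_ hρ0
        simpa using geom_sum_Ico_le_of_lt_one (m := 0) (n := n - T) hρ0 (by linarith)
    _ ≤ 2 * ρ := by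
        rw [mul_comm]
        exact mul_le_mul_of_nonneg_right (by rw [div_le_iff₀ (by linarith)]; linarith) hρ0

lemma sum_mul_le_add_sum_filter {α : Type*} [Fintype α] {w f : α → ℝ} {B : ℝ}
    (P : α → Prop) [DecidablePred P] (hw : ∀ a, 0 ≤ w a) (hw1 : ∑ a, w a ≤ 1) (hf1 : ∀ a, f a ≤ 1)
    (hfB : ∀ a, ¬ P a → f a ≤ B) (hB : 0 ≤ B) :
    ∑ a, w a * f a ≤ B + ∑ a with P a, w a := by
  rw [← sum_filter_add_sum_filter_not univ P, add_comm]
  refine add_le_add ?_ (sum_le_sum fun a _ => mul_le_of_le_one_right (hw a) (hf1 a))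
  calc ∑ a with ¬ P a, w a * f a ≤ ∑ a with ¬ P a, w a * B :=
        sum_le_sum fun a ha => mul_le_mul_of_nonneg_left (hfB a (mem_filter.1 ha).2) (hw a)
    _ ≤ (∑ a, w a) * B := by
        rw [← sum_mul]
        exact mul_le_mul_of_nonneg_right (sum_le_sum_of_subset_of_nonneg (filter_subset _ _)
          fun a _ _ => hw a) hB
    _ ≤ B := mul_le_of_le_one_left hB hw1

lemma errProbTol_nonneg {n m v : ℕ} {lam p : ℝ} (hlam : 0 ≤ lam) (hp0 : 0 ≤ p)
    (hp1 : p ≤ 1) : 0 ≤ errProbTol n m v lam p :=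
  sum_nonneg fun C _ => sum_nonneg fun S _ => mul_nonneg
    (mul_nonneg (bernWeight_nonneg hp0 hp1 C) (pgtWeight_nonneg hlam S)) (by split <;> norm_num)

lemma errProbTol_le {n m v T : ℕ} {lam p t : ℝ} (hlam : 0 ≤ lam) (hp0 : 0 ≤ p)
    (hp1 : p ≤ 1) (ht0 : 0 < t) (ht1 : t ≤ 1) :
    errProbTol n m v lam p ≤ n * (1 - (1 - t) * (p * (1 - p) ^ T)) ^ m / t ^ (2 * v)
      + ∑ d ∈ range (n + 1) with T < d, truncPoisson n lam d := by
  have htail : ∑ S : Finset (Fin n) with T < #S, pgtWeight n lam S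
      = ∑ d ∈ range (n + 1) with T < d, truncPoisson n lam d := by
    simpa [sum_filter] using sum_pgtWeight_mul_comp_card n lam (fun d => if T < d then 1 else 0)
  rw [errProbTol_eq_sum_pgtWeight_mul_failProb, ← htail]
  refine sum_mul_le_add_sum_filter (fun S => T < #S) (pgtWeight_nonneg hlam)
    (sum_pgtWeight hlam).le (failProb_le_one hp0 hp1) (fun S hS => ?_) (by
      have := one_sub_mul_mul_one_sub_pow_nonneg hp0 hp1 ht0.le T
      positivity)
  refine (failProb_le hp0 hp1 ht0 ht1 S).trans ?_
  have hS : (1 - p) ^ T ≤ (1 - p) ^ #S :=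
    pow_le_pow_of_le_one (by linarith) (by linarith) (not_lt.1 hS)
  gcongr
  exact one_sub_mul_mul_one_sub_pow_nonneg hp0 hp1 ht0.le _

/-- With `p = 1 / L` and `10 T ≤ L`, a test isolates a fixed item from `T` others with
probability at least `9 / (10 L)`; the constants `2e` and `4e` in `m` then beat `3 log n + 2 v`. -/
lemma chernoff_term_le_inv_sq {n m v L T : ℕ} (hn : 1 ≤ n) (hL : 1 ≤ L) (hTL : 10 * T ≤ L)
    (hm : 2 * Real.exp 1 * (L : ℝ) ^ 2 * Real.log n + 4 * Real.exp 1 * v * L ≤ m) :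
    n * (1 - (1 - Real.exp (-1)) * (1 / L * (1 - 1 / L) ^ T)) ^ m / Real.exp (-1) ^ (2 * v)
      ≤ ((n : ℝ) ^ 2)⁻¹ := by
  set p : ℝ := 1 / L
  set c : ℝ := 1 - Real.exp (-1)
  set E : ℝ := Real.exp 1
  have hL0 : (0 : ℝ) < L := by exact_mod_cast hL
  have hp0 : 0 ≤ p := by positivity
  have hp1 : p ≤ 1 := by simpa [p] using Nat.cast_inv_le_one L
  have hpL : p * L = 1 := one_div_mul_cancel hL0.ne'
  have hq : p * (9 / 10) ≤ p * (1 - p) ^ T := by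
    have hTp : T * p ≤ 1 / 10 := by
      rw [mul_one_div, div_le_div_iff₀ hL0 (by norm_num)]
      exact_mod_cast (by omega : T * 10 ≤ 1 * L)
    have := one_add_mul_le_pow (a := -p) (by linarith) T
    rw [← sub_eq_add_neg] at this
    exact mul_le_mul_of_nonneg_left (by linarith) hp0
  have hc0 : 0 ≤ c := by simp [c, Real.exp_le_one_iff]
  have hcE : c * E = E - 1 := by simp only [c, E, sub_mul, ← Real.exp_add]; norm_num
  have hE : 2.7 < E := lt_trans (by norm_num) Real.exp_one_gt_d9
  have hlog : 0 ≤ Real.log n := Real.log_nonneg (by exact_mod_cast hn)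
  have hexponent : 3 * Real.log n + 2 * v ≤ m * (c * (p * (1 - p) ^ T)) :=
    calc 3 * Real.log n + 2 * v ≤ 9 / 5 * (E - 1) * (L * Real.log n) + 18 / 5 * (E - 1) * v := by
          have : Real.log n ≤ L * Real.log n := le_mul_of_one_le_left hlog (by exact_mod_cast hL)
          nlinarith [(Nat.cast_nonneg v : (0 : ℝ) ≤ v)]
      _ = (2 * E * (L : ℝ) ^ 2 * Real.log n + 4 * E * v * L) * (c * (p * (9 / 10))) := by
          rw [← hcE]
          linear_combination (-(9 / 5) * c * E * L * Real.log n - 18 / 5 * c * E * v) * hpL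
      _ ≤ m * (c * (p * (1 - p) ^ T)) := by
          gcongr
  calc n * (1 - c * (p * (1 - p) ^ T)) ^ m / Real.exp (-1) ^ (2 * v)
      ≤ n * Real.exp (-(c * (p * (1 - p) ^ T))) ^ m / Real.exp (-1) ^ (2 * v) := by
        gcongr
        · exact one_sub_mul_mul_one_sub_pow_nonneg hp0 hp1 (by positivity) T
        · exact Real.one_sub_le_exp_neg _
    _ = n * Real.exp (2 * v - m * (c * (p * (1 - p) ^ T))) := by
        rw [← Real.exp_nat_mul, ← Real.exp_nat_mul, mul_div_assoc, ← Real.exp_sub]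
        push_cast
        ring_nf
    _ ≤ n * Real.exp (-(3 * Real.log n)) := by
        gcongr
        linarith
    _ = ((n : ℝ) ^ 2)⁻¹ := by
        have hn0 : (0 : ℝ) < n := by exact_mod_cast hn
        rw [Real.exp_neg, show 3 * Real.log n = Real.log (n ^ 3) by rw [Real.log_pow]; norm_num,
          Real.exp_log (by positivity)]
        field_simp

lemma ten_mul_ceil_rpow_le_ceil_rpow_add {x a δ : ℝ} (hx : 1 ≤ x) (ha : 0 ≤ a)
    (hδ : 20 ≤ x ^ δ) : 10 * ⌈x ^ a⌉₊ ≤ ⌈x ^ (a + δ)⌉₊ := by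
  have h1 : 1 ≤ x ^ a := Real.one_le_rpow hx ha
  have : (10 * ⌈x ^ a⌉₊ : ℝ) ≤ x ^ (a + δ) :=
    calc (10 * ⌈x ^ a⌉₊ : ℝ) ≤ 10 * (x ^ a + 1) := by
          gcongr; exact (Nat.ceil_lt_add_one (by positivity)).le
      _ ≤ x ^ a * 20 := by linarith
      _ ≤ x ^ (a + δ) := by
          rw [Real.rpow_add (by positivity)]
          gcongr
  exact_mod_cast this.trans (Nat.le_ceil _)

lemma div_ceil_rpow_add_one_le {x δ : ℝ} (hx : 0 < x) :
    x / (⌈x ^ (1 + δ)⌉₊ + 1) ≤ x ^ (-δ) := by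
  have hxδ : x / x ^ (1 + δ) = x ^ (-δ) := by
    rw [Real.rpow_add hx, Real.rpow_one, Real.rpow_neg hx.le]
    field_simp
  rw [← hxδ]
  gcongr
  exact (Nat.le_ceil _).trans (by linarith)

lemma errProbTol_le_inv_sq_add_rpow {n v : ℕ} {x ε : ℝ} (hn : 1 ≤ n) (hx : 1 ≤ x)
    (hε : 0 < ε) (h20 : 20 ≤ x ^ (ε / 2)) :
    errProbTol n ⌈2 * Real.exp 1 * (⌈x ^ ((1 : ℝ) + ε)⌉₊ : ℝ) ^ 2 * Real.log n
        + 4 * Real.exp 1 * v * (⌈x ^ ((1 : ℝ) + ε)⌉₊ : ℝ)⌉₊ v x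
        (1 / (⌈x ^ ((1 : ℝ) + ε)⌉₊ : ℝ))
      ≤ ((n : ℝ) ^ 2)⁻¹ + 2 * x ^ (-(ε / 2)) := by
  set L := ⌈x ^ ((1 : ℝ) + ε)⌉₊
  set T := ⌈x ^ ((1 : ℝ) + ε / 2)⌉₊
  have hL : 1 ≤ L := Nat.one_le_ceil_iff.2 (by positivity)
  have hTL : 10 * T ≤ L := by
    simpa [add_assoc] using
      ten_mul_ceil_rpow_le_ceil_rpow_add hx (a := 1 + ε / 2) (by positivity) h20
  have hdecay : x ^ (-(ε / 2)) ≤ 1 / 2 := by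
    rw [Real.rpow_neg (by positivity)]
    exact inv_le_of_inv_le₀ (by norm_num) (by linarith)
  calc _ ≤ _ := errProbTol_le (T := T) (t := Real.exp (-1)) (by positivity) (by positivity)
          (by simpa using Nat.cast_inv_le_one L) (Real.exp_pos _) (by simp)
    _ ≤ _ := add_le_add (chernoff_term_le_inv_sq hn hL hTL (Nat.le_ceil _))
          ((sum_truncPoisson_gt_le (by positivity)
            ((div_ceil_rpow_add_one_le (by positivity)).trans hdecay)).trans
            (by gcongr; exact div_ceil_rpow_add_one_le (by positivity)))

theorem stmt3_general (lam : ℕ → ℝ)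
    (hlaminf : Tendsto lam atTop atTop)
    (ε : ℝ) (hε : 0 < ε) (v : ℕ → ℕ)
    (p : ℕ → ℝ) (hp : ∀ n, p n = 1 / (⌈lam n ^ ((1 : ℝ) + ε)⌉₊ : ℝ))
    (m : ℕ → ℕ)
    (hm : ∀ n, m n = ⌈2 * Real.exp 1 * (⌈lam n ^ ((1 : ℝ) + ε)⌉₊ : ℝ) ^ 2 * Real.log n
        + 4 * Real.exp 1 * v n * (⌈lam n ^ ((1 : ℝ) + ε)⌉₊ : ℝ)⌉₊) :
    Tendsto (fun n => errProbTol n (m n) (v n) (lam n) (p n)) atTop (nhds 0) := by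
  have hinvsq : Tendsto (fun n : ℕ => ((n : ℝ) ^ 2)⁻¹) atTop (nhds 0) :=
    ((tendsto_pow_atTop two_ne_zero).comp tendsto_natCast_atTop_atTop).inv_tendsto_atTop
  have hdecay : Tendsto (fun n => lam n ^ (-(ε / 2))) atTop (nhds 0) :=
    (tendsto_rpow_neg_atTop (half_pos hε)).comp hlaminf
  refine squeeze_zero' ?_ ?_ (by simpa using hinvsq.add (hdecay.const_mul 2))
  · filter_upwards [hlaminf.eventually_ge_atTop 0] with n hn
    rw [hp]
    exact errProbTol_nonneg hn (by positivity) (by simpa using Nat.cast_inv_le_one _)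
  · filter_upwards [eventually_ge_atTop 1, hlaminf.eventually_ge_atTop 1,
      ((tendsto_rpow_atTop (half_pos hε)).comp hlaminf).eventually_ge_atTop 20] with n hn hx h20
    rw [hp, hm]
    exact errProbTol_le_inv_sq_add_rpow hn hx hε h20

theorem stmt3 (lam : ℕ → ℝ) (hpos : ∀ n, 0 < lam n)
    (hlamo : Tendsto (fun n => lam n / n) atTop (nhds 0))
    (hlaminf : Tendsto lam atTop atTop)
    (ε : ℝ) (hε : 0 < ε) (v : ℕ → ℕ)
    (p : ℕ → ℝ) (hp : ∀ n, p n = 1 / (⌈lam n ^ ((1 : ℝ) + ε)⌉₊ : ℝ))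
    (m : ℕ → ℕ)
    (hm : ∀ n, m n = ⌈2 * Real.exp 1 * (⌈lam n ^ ((1 : ℝ) + ε)⌉₊ : ℝ) ^ 2 * Real.log n
        + 4 * Real.exp 1 * v n * (⌈lam n ^ ((1 : ℝ) + ε)⌉₊ : ℝ)⌉₊) :
    Tendsto (fun n => errProbTol n (m n) (v n) (lam n) (p n)) atTop (nhds 0) :=
  stmt3_general lam hlaminf ε hε v p hp m hm
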